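/- arXiv:2508.16242 — 7 statements merged into one kernel-verified Lean document; each statement's English description precedes it below -/
import Mathlib

section
/- For every finite normative system N and finite input A, a propositional formula φ is in the reusable output out3(N,A) if and only if the finite basis B3(N,A) semantically entails φ. -/
/-- Formulas of classical propositional logic over countably many atoms. -/
inductive PropForm : Type
  | atom : ℕ → PropForm
  | fls  : PropForm
  | neg  : PropForm → PropForm
  | conj : PropForm → PropForm → PropForm
  | disj : PropForm → PropForm → PropForm

/-- Truth of a formula under a valuation. -/
def PropForm.eval (v : ℕ → Prop) : PropForm → Prop
  | .atom n => v n
  | .fls => False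
  | .neg p => ¬ PropForm.eval v p
  | .conj p q => PropForm.eval v p ∧ PropForm.eval v q
  | .disj p q => PropForm.eval v p ∨ PropForm.eval v q

/-- Semantic consequence `A ⊢ φ`. -/
def Entails (A : Set PropForm) (φ : PropForm) : Prop :=
  ∀ v : ℕ → Prop, (∀ ψ ∈ A, ψ.eval v) → φ.eval v

/-- Propositional satisfiability of a set of formulas. -/
def Satisfiable (A : Set PropForm) : Prop :=
  ∃ v : ℕ → Prop, ∀ ψ ∈ A, ψ.eval v

/-- Consequence set `Cn(A)`. -/
def Cn (A : Set PropForm) : Set PropForm := {φ | Entails A φ}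

/-- A conditional norm `(body, head)`. -/
abbrev IONorm := PropForm × PropForm

/-- Image `N(A)` of a set of formulas under a normative system. -/
def img (N : Set IONorm) (A : Set PropForm) : Set PropForm :=
  {x | ∃ a ∈ A, (a, x) ∈ N}

/-- Heads of the norms of a normative system. -/
def heads (N : Set IONorm) : Set PropForm := {φ | ∃ n ∈ N, φ = n.2}

/-- `A` directly triggers norm `n`: `A ⊢ body(n)`. -/
def Trig (A : Set PropForm) (n : IONorm) : Prop := Entails A n.1

/-- Simple-minded output `out1(N,A) = Cn(N(Cn(A)))`. -/
def out1 (N : Set IONorm) (A : Set PropForm) : Set PropForm :=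
  Cn (img N (Cn A))

/-- A complete set: all of `L`, or maximally consistent. -/
def CompleteSet (V : Set PropForm) : Prop :=
  V = Set.univ ∨ (Satisfiable V ∧ ∀ W, V ⊆ W → Satisfiable W → W = V)

/-- Basic output `out2(N,A)`. -/
def out2 (N : Set IONorm) (A : Set PropForm) : Set PropForm :=
  ⋂ V ∈ {V : Set PropForm | A ⊆ V ∧ CompleteSet V}, Cn (img N V)

/-- Reusable output `out3(N,A)`. -/
def out3 (N : Set IONorm) (A : Set PropForm) : Set PropForm :=
  ⋂ B ∈ {B : Set PropForm | A ⊆ B ∧ B = Cn B ∧ img N B ⊆ B}, Cn (img N B)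

/-- Basic reusable output `out4(N,A)`. -/
def out4 (N : Set IONorm) (A : Set PropForm) : Set PropForm :=
  ⋂ V ∈ {V : Set PropForm | A ⊆ V ∧ img N V ⊆ V ∧ CompleteSet V}, Cn (img N V)

/-- Basis `B1(N,A)` of the simple-minded output. -/
def B1 (N : Set IONorm) (A : Set PropForm) : Set PropForm :=
  {φ | ∃ n ∈ N, Trig A n ∧ φ = n.2}

/-- Iterated bases `B3^i(N,A)`. -/
def B3i (N : Set IONorm) (A : Set PropForm) : ℕ → Set PropForm
  | 0 => B1 N A
  | i + 1 => B1 N (A ∪ B3i N A i)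

/-- `B3(N,A)`: the fixed point `B3^j(N,A)` for the least `j` with
`B3^j(N,A) = B3^{j+1}(N,A)`. -/
noncomputable def B3 (N : Set IONorm) (A : Set PropForm) : Set PropForm :=
  B3i N A (sInf {j | B3i N A j = B3i N A (j + 1)})

/-- Disjunction of the bodies of a finite set of norms. -/
noncomputable def bodyDisj (s : Finset IONorm) : PropForm :=
  (s.toList.map Prod.fst).foldr PropForm.disj PropForm.fls

/-- Weak output `wo(N')`: disjunction of the heads of a finite set of norms. -/
noncomputable def wo (s : Finset IONorm) : PropForm :=
  (s.toList.map Prod.snd).foldr PropForm.disj PropForm.fls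

/-- `A` weakly triggers `N'`: `A ⊢ ⋁_{n ∈ N'} body(n)`. -/
def WTrig (A : Set PropForm) (s : Finset IONorm) : Prop :=
  Entails A (bodyDisj s)

/-- `A` minimally weakly triggers `N'`. -/
def MinWTrig (A : Set PropForm) (s : Finset IONorm) : Prop :=
  WTrig A s ∧ ∀ t : Finset IONorm, t.Nonempty → t ⊂ s → ¬ WTrig A t

/-- Basis `B2(N,A)` of the basic output. -/
def B2 (N : Finset IONorm) (A : Set PropForm) : Set PropForm :=
  {φ | ∃ s : Finset IONorm, s.Nonempty ∧ s ⊆ N ∧ WTrig A s ∧ φ = wo s}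

/-- Materialization `m(N) = {¬a ∨ x | (a,x) ∈ N}`. -/
def mat (N : Set IONorm) : Set PropForm :=
  {φ | ∃ p ∈ N, φ = PropForm.disj (PropForm.neg p.1) p.2}

/-- The throughput norms `I = {(x,x) | x ∈ L}`. -/
def thruI : Set IONorm := {p | p.1 = p.2}

/-- Element-wise negation of the bodies of a finite set of norms. -/
def negBodies (N : Finset IONorm) : Set PropForm :=
  {φ | ∃ n ∈ N, φ = PropForm.neg n.1}

/-- `C'` is a minimal unsatisfiable subset (MUS) of `C`. -/
def IsMUS (C C' : Set PropForm) : Prop :=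
  C' ⊆ C ∧ ¬ Satisfiable C' ∧ ∀ C'' ⊂ C', Satisfiable C''

section Aux

lemma Entails_mono {S T : Set PropForm} {φ : PropForm} (h : S ⊆ T)
    (hS : Entails S φ) : Entails T φ := fun v hv => hS v (fun ψ hψ => hv ψ (h hψ))

lemma Entails_cut {S T : Set PropForm} {φ : PropForm}
    (h : ∀ ψ ∈ S, Entails T ψ) (hS : Entails S φ) : Entails T φ :=
  fun v hv => hS v (fun ψ hψ => h ψ hψ v hv)

lemma B1_mono (N : Set IONorm) {A A' : Set PropForm} (h : A ⊆ A') :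
    B1 N A ⊆ B1 N A' := by
  rintro φ ⟨n, hn, ht, rfl⟩
  exact ⟨n, hn, Entails_mono h ht, rfl⟩

lemma B3i_succ_mono (N : Set IONorm) (A : Set PropForm) :
    ∀ i, B3i N A i ⊆ B3i N A (i + 1) := by
  intro i
  induction i with
  | zero => exact B1_mono N (Set.subset_union_left)
  | succ i ih =>
      exact B1_mono N (Set.union_subset_union_right A ih)

lemma B3i_subset_heads (N : Set IONorm) (A : Set PropForm) (i : ℕ) :
    B3i N A i ⊆ heads N := by
  cases i with
  | zero => rintro φ ⟨n, hn, _, rfl⟩; exact ⟨n, hn, rfl⟩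
  | succ i => rintro φ ⟨n, hn, _, rfl⟩; exact ⟨n, hn, rfl⟩

lemma heads_finite {N : Set IONorm} (hN : N.Finite) : (heads N).Finite := by
  have : heads N ⊆ Prod.snd '' N := by
    rintro φ ⟨n, hn, rfl⟩; exact ⟨n, hn, rfl⟩
  exact (hN.image Prod.snd).subset this

lemma exists_B3_fixed (N : Set IONorm) (A : Set PropForm) (hN : N.Finite) :
    ∃ j, B3i N A j = B3i N A (j + 1) := by
  by_contra hcon
  push_neg at hcon
  have hfin : ∀ i, (B3i N A i).Finite :=
    fun i => (heads_finite hN).subset (B3i_subset_heads N A i)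
  have hstrict : ∀ i, (B3i N A i).ncard < (B3i N A (i+1)).ncard := by
    intro i
    exact Set.ncard_lt_ncard (lt_of_le_of_ne (B3i_succ_mono N A i) (hcon i)) (hfin (i+1))
  have hge : ∀ i, i ≤ (B3i N A i).ncard := by
    intro i
    induction i with
    | zero => exact Nat.zero_le _
    | succ i ih => exact Nat.lt_of_le_of_lt ih (hstrict i)
  have hbound : ∀ i, (B3i N A i).ncard ≤ (heads N).ncard :=
    fun i => Set.ncard_le_ncard (B3i_subset_heads N A i) (heads_finite hN)
  have := hge ((heads N).ncard + 1)
  have := hbound ((heads N).ncard + 1)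
  omega

lemma B3_fixed (N : Set IONorm) (A : Set PropForm) (hN : N.Finite) :
    B1 N (A ∪ B3 N A) = B3 N A := by
  have hne : {j | B3i N A j = B3i N A (j + 1)}.Nonempty := exists_B3_fixed N A hN
  have := Nat.sInf_mem hne
  simp only [Set.mem_setOf_eq] at this
  unfold B3
  exact this.symm

lemma Cn_idem (X : Set PropForm) : Cn (Cn X) = Cn X := by
  ext φ
  constructor
  · intro h
    exact Entails_cut (fun ψ hψ => hψ) h
  · intro h
    exact Entails_mono (fun ψ hψ v hv => hv ψ hψ) h

end Aux

/-- For every finite normative system `N` and finite input `A`,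
`φ ∈ out3(N,A)` iff the finite basis `B3(N,A)` semantically entails `φ`. -/
theorem out3_iff_basis_entails (N : Set IONorm) (A : Set PropForm)
    (hN : N.Finite) (hA : A.Finite) (φ : PropForm) :
    φ ∈ out3 N A ↔ Entails (B3 N A) φ := by
  have hfix := B3_fixed N A hN
  set F := B3 N A with hF
  constructor
  · intro h
    have hmem : Cn (A ∪ F) ∈ {B : Set PropForm | A ⊆ B ∧ B = Cn B ∧ img N B ⊆ B} := by
      refine ⟨fun ψ hψ v hv => hv ψ (Or.inl hψ), (Cn_idem _).symm, ?_⟩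
      rintro x ⟨a, ha, hax⟩
      have : x ∈ F := hfix ▸ ⟨(a, x), hax, ha, rfl⟩
      exact fun v hv => hv x (Or.inr this)
    have hφ := Set.mem_iInter₂.mp h _ hmem
    refine Entails_mono ?_ hφ
    rintro x ⟨a, ha, hax⟩
    exact hfix ▸ ⟨(a, x), hax, ha, rfl⟩
  · intro hφ
    refine Set.mem_iInter₂.mpr ?_
    rintro B ⟨hAB, hBCn, hNB⟩
    have hAent : ∀ ψ ∈ A, Entails B ψ := fun ψ hψ v hv => hv ψ (hAB hψ)
    have key : ∀ i, ∀ ψ ∈ B3i N A i, Entails (img N B) ψ := by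
      intro i
      induction i with
      | zero =>
          rintro ψ ⟨n, hn, ht, rfl⟩
          have hb : n.1 ∈ B := hBCn ▸ Entails_cut hAent ht
          exact fun v hv => hv n.2 ⟨n.1, hb, hn⟩
      | succ i ih =>
          rintro ψ ⟨n, hn, ht, rfl⟩
          have hent : ∀ χ ∈ A ∪ B3i N A i, Entails B χ := by
            rintro χ (hχ | hχ)
            · exact hAent χ hχ
            · exact Entails_mono hNB (ih χ hχ)
          have hb : n.1 ∈ B := hBCn ▸ Entails_cut hent ht
          exact fun v hv => hv n.2 ⟨n.1, hb, hn⟩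
    have hFj : ∀ ψ ∈ F, Entails (img N B) ψ := key _
    exact Entails_cut hFj hφ
end

section
/- For every finite normative system N and finite input A, a propositional formula φ is in the basic output out2(N,A) if and only if the finite basis B2(N,A) semantically entails φ. -/
lemma foldr_disj_eval (v : ℕ → Prop) (l : List PropForm) :
    (l.foldr PropForm.disj PropForm.fls).eval v ↔ ∃ p ∈ l, p.eval v := by
  induction l with
  | nil => simp [PropForm.eval]
  | cons p l ih => simp [PropForm.eval, ih]

lemma bodyDisj_eval (v : ℕ → Prop) (s : Finset IONorm) :
    (bodyDisj s).eval v ↔ ∃ n ∈ s, n.1.eval v := by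
  simp [bodyDisj, foldr_disj_eval]

lemma wo_eval (v : ℕ → Prop) (s : Finset IONorm) :
    (wo s).eval v ↔ ∃ n ∈ s, n.2.eval v := by
  simp only [wo, foldr_disj_eval, List.mem_map, Finset.mem_toList]
  constructor
  · rintro ⟨p, ⟨n, hn, rfl⟩, hp⟩; exact ⟨n, hn, hp⟩
  · rintro ⟨n, hn, hp⟩; exact ⟨n.2, ⟨n, hn, rfl⟩, hp⟩

/-- The theory of a valuation. -/
def theory (w : ℕ → Prop) : Set PropForm := {φ | φ.eval w}

lemma theory_complete (w : ℕ → Prop) : CompleteSet (theory w) := by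
  right
  refine ⟨⟨w, fun ψ h => h⟩, ?_⟩
  rintro W hsub ⟨u, hu⟩
  ext ψ
  constructor
  · intro hψ
    by_contra hn
    have hneg : PropForm.neg ψ ∈ theory w := hn
    exact (hu _ (hsub hneg)) (hu ψ hψ)
  · exact fun h => hsub h

/-- For every finite normative system `N` and finite input `A`,
`φ ∈ out2(N,A)` iff the finite basis `B2(N,A)` semantically entails `φ`. -/
theorem out2_iff_basis_entails (N : Finset IONorm) (A : Set PropForm)
    (hA : A.Finite) (φ : PropForm) :
    φ ∈ out2 ↑N A ↔ Entails (B2 N A) φ := by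
  classical
  constructor
  · intro h v hv
    by_cases hAsat : Satisfiable A
    · obtain ⟨w, hw⟩ := hAsat
      by_cases hcase : ∃ w' : ℕ → Prop, (∀ ψ ∈ A, ψ.eval w') ∧
          ∀ n ∈ N, n.1.eval w' → n.2.eval v
      · obtain ⟨w', hw'A, hw'N⟩ := hcase
        have hV : theory w' ∈ {V : Set PropForm | A ⊆ V ∧ CompleteSet V} :=
          ⟨fun ψ hψ => hw'A ψ hψ, theory_complete w'⟩
        have hCn : φ ∈ Cn (img ↑N (theory w')) := Set.mem_iInter₂.mp h _ hV
        apply hCn v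
        rintro x ⟨a, ha, hax⟩
        exact hw'N (a, x) hax ha
      · push_neg at hcase
        set s := N.filter (fun n => ¬ n.2.eval v) with hs
        have hmem : ∀ u : ℕ → Prop, (∀ ψ ∈ A, ψ.eval u) → ∃ n ∈ s, n.1.eval u := by
          intro u hu
          obtain ⟨n, hnN, hn1, hn2⟩ := hcase u hu
          exact ⟨n, Finset.mem_filter.mpr ⟨hnN, hn2⟩, hn1⟩
        have hsne : s.Nonempty := by
          obtain ⟨n, hn, _⟩ := hmem w hw
          exact ⟨n, hn⟩
        have hwt : WTrig A s := by
          intro u hu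
          rw [bodyDisj_eval]
          exact hmem u hu
        have hB2 : wo s ∈ B2 N A := ⟨s, hsne, Finset.filter_subset _ _, hwt, rfl⟩
        have := hv _ hB2
        rw [wo_eval] at this
        obtain ⟨n, hn, hn2⟩ := this
        exact absurd hn2 (Finset.mem_filter.mp hn).2
    · have hV : (Set.univ : Set PropForm) ∈ {V : Set PropForm | A ⊆ V ∧ CompleteSet V} :=
        ⟨Set.subset_univ _, Or.inl rfl⟩
      have hCn : φ ∈ Cn (img ↑N Set.univ) := Set.mem_iInter₂.mp h _ hV
      apply hCn v
      rintro x ⟨a, -, hax⟩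
      have hB2 : wo {(a, x)} ∈ B2 N A :=
        ⟨{(a, x)}, Finset.singleton_nonempty _, Finset.singleton_subset_iff.mpr hax,
          fun u hu => absurd ⟨u, hu⟩ hAsat, rfl⟩
      have := hv _ hB2
      rw [wo_eval] at this
      obtain ⟨n, hn, hn2⟩ := this
      rw [Finset.mem_singleton] at hn
      subst hn
      exact hn2
  · intro h
    apply Set.mem_iInter₂.mpr
    rintro V ⟨hAV, hVc⟩ v hvNV
    apply h v
    rintro ψ ⟨s, hsne, hsN, hst, rfl⟩
    rcases hVc with huniv | ⟨⟨w, hwV⟩, hmax⟩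
    · obtain ⟨n, hn⟩ := hsne
      have hx : n.2 ∈ img ↑N V := ⟨n.1, by rw [huniv]; trivial, by simpa using hsN hn⟩
      rw [wo_eval]
      exact ⟨n, hn, hvNV _ hx⟩
    · have hwA : ∀ ψ ∈ A, ψ.eval w := fun ψ hψ => hwV ψ (hAV hψ)
      have := hst w hwA
      rw [bodyDisj_eval] at this
      obtain ⟨n, hn, hn1⟩ := this
      have hbody : n.1 ∈ V := by
        have hsat : Satisfiable (V ∪ {n.1}) := by
          refine ⟨w, ?_⟩
          rintro ψ (hψ | hψ)
          · exact hwV ψ hψ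
          · rw [Set.mem_singleton_iff] at hψ; subst hψ; exact hn1
        have := hmax (V ∪ {n.1}) Set.subset_union_left hsat
        rw [← this]
        exact Or.inr rfl
      have hx : n.2 ∈ img ↑N V := ⟨n.1, hbody, by simpa using hsN hn⟩
      rw [wo_eval]
      exact ⟨n, hn, hvNV _ hx⟩
end

section
/- For every normative system N and input A, the basic reusable output equals the basic output of the materialized input: out4(N,A) = out2(N, A ∪ m(N)), where m(N) = {¬a ∨ x | (a,x) ∈ N} is the materialization of N. -/
lemma complete_cases (V : Set PropForm) (h : CompleteSet V) :
    V = Set.univ ∨ ∃ v, V = {φ | φ.eval v} := by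
  rcases h with h | ⟨⟨v, hv⟩, hmax⟩
  · exact Or.inl h
  · exact Or.inr ⟨v, (hmax {φ | φ.eval v} (fun ψ hψ => hv ψ hψ)
      ⟨v, fun ψ hψ => hψ⟩).symm⟩

/-- `out4(N,A) = out2(N, A ∪ m(N))`. -/
theorem out4_eq_out2_materialization (N : Set IONorm) (hN : N.Finite)
    (A : Set PropForm) :
    out4 N A = out2 N (A ∪ mat N) := by
  have hset : {V : Set PropForm | A ⊆ V ∧ img N V ⊆ V ∧ CompleteSet V}
      = {V : Set PropForm | A ∪ mat N ⊆ V ∧ CompleteSet V} := by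
    ext V
    constructor
    · rintro ⟨hA, hcl, hC⟩
      refine ⟨Set.union_subset hA ?_, hC⟩
      rcases complete_cases V hC with rfl | ⟨v, rfl⟩
      · exact Set.subset_univ _
      · rintro φ ⟨⟨a, x⟩, hmem, rfl⟩
        show (PropForm.disj (PropForm.neg a) x).eval v
        by_cases ha : a.eval v
        · exact Or.inr (hcl ⟨a, ha, hmem⟩)
        · exact Or.inl ha
    · rintro ⟨hAm, hC⟩
      refine ⟨fun φ h => hAm (Or.inl h), ?_, hC⟩
      rcases complete_cases V hC with rfl | ⟨v, rfl⟩
      · exact fun _ _ => trivial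
      · rintro x ⟨a, haV, hN⟩
        have h2 : (PropForm.disj (PropForm.neg a) x).eval v :=
          hAm (Or.inr ⟨(a, x), hN, rfl⟩)
        rcases h2 with h2 | h2
        · exact absurd haV h2
        · exact h2
  rw [out4, out2, hset]
end

section
/- Let N be a finite normative system, A an input, and D = A ∪ {¬body(n) | n ∈ N}. If A' ∪ {¬body(n) | n ∈ N'} is a minimal unsatisfiable subset of D for some A' ⊆ A and nonempty N' ⊆ N, then N' is weakly triggered by A, i.e., A ▶ N'. -/
/-- If `A' ∪ {¬body(n) | n ∈ N'}` is a MUS of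
`D = A ∪ {¬body(n) | n ∈ N}` for some `A' ⊆ A` and nonempty `N' ⊆ N`,
then `A ▶ N'`. -/
theorem mus_gives_wtrig (N : Finset IONorm) (A : Set PropForm)
    (N' : Finset IONorm) (A' : Set PropForm)
    (hA' : A' ⊆ A) (hne : N'.Nonempty) (hsub : N' ⊆ N)
    (hmus : IsMUS (A ∪ negBodies N) (A' ∪ negBodies N')) :
    WTrig A N' := by
  intro v hv
  obtain ⟨_, hunsat, _⟩ := hmus
  unfold bodyDisj
  rw [foldr_disj_eval]
  by_contra h
  push_neg at h
  apply hunsat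
  refine ⟨v, ?_⟩
  rintro ψ (hψ | ⟨n, hn, rfl⟩)
  · exact hv ψ (hA' hψ)
  · intro hb
    exact h n.1 (by simp only [List.mem_map]; exact ⟨n, Finset.mem_toList.2 hn, rfl⟩) hb
end

section
/- For the basic and basic-reusable throughput operators: for every finite normative system N and finite input A and for i ∈ {2,4}, a propositional formula φ is in out_i+(N,A) := out_i(N ∪ I, A), where I = {(x,x) | x ∈ L}, if and only if A ∪ m(N) semantically entails φ, where m(N) = {¬a ∨ x | (a,x) ∈ N} is the materialization of N. -/
/-- For every finite normative system `N`, finite input `A` and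
`i ∈ {2,4}`: `φ ∈ out_i+(N,A) = out_i(N ∪ I, A)` iff `A ∪ m(N)` semantically
entails `φ`. -/
theorem out2plus_out4plus_iff_materialization_entails (N : Set IONorm)
    (A : Set PropForm) (hN : N.Finite) (hA : A.Finite) (φ : PropForm) :
    (φ ∈ out2 (N ∪ thruI) A ↔ Entails (A ∪ mat N) φ) ∧
    (φ ∈ out4 (N ∪ thruI) A ↔ Entails (A ∪ mat N) φ) := by
  -- backward direction: entailment implies membership in each Cn(img ... V)
  have hback : ∀ (h : Entails (A ∪ mat N) φ) (V : Set PropForm), A ⊆ V →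
      CompleteSet V → Entails (img (N ∪ thruI) V) φ := by
    intro h V hAV hV v hv
    rcases hV with rfl | ⟨hsat, hmax⟩
    · exact hv φ ⟨φ, Set.mem_univ φ, Or.inr rfl⟩
    · have hVv : ∀ ψ ∈ V, ψ.eval v := fun ψ hψ => hv ψ ⟨ψ, hψ, Or.inr rfl⟩
      apply h v
      rintro ψ (hψ | ⟨⟨a, x⟩, haN, rfl⟩)
      · exact hVv ψ (hAV hψ)
      · by_cases ha : a ∈ V
        · exact Or.inr (hv x ⟨a, ha, Or.inl haN⟩)
        · refine Or.inl ?_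
          intro hav
          have hsat' : Satisfiable (insert a V) := by
            refine ⟨v, ?_⟩
            rintro χ (rfl | hχ)
            · exact hav
            · exact hVv χ hχ
          exact ha (by
            rw [← hmax (insert a V) (Set.subset_insert a V) hsat']
            exact Set.mem_insert a V)
  -- forward direction : given a valuation v of A ∪ mat N, its theory is a witness set
  have hfwd : ∀ (v : ℕ → Prop), (∀ ψ ∈ A ∪ mat N, ψ.eval v) →
      A ⊆ {ψ : PropForm | ψ.eval v} ∧
      img (N ∪ thruI) {ψ : PropForm | ψ.eval v} ⊆ {ψ : PropForm | ψ.eval v} ∧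
      CompleteSet {ψ : PropForm | ψ.eval v} := by
    intro v hv
    refine ⟨fun ψ hψ => hv ψ (Or.inl hψ), ?_, ?_⟩
    · rintro x ⟨a, haV, (hN' | hI)⟩
      · have := hv _ (Or.inr ⟨(a, x), hN', rfl⟩)
        rcases this with hna | hx
        · exact absurd haV hna
        · exact hx
      · have : a = x := hI
        exact this ▸ haV
    · right
      refine ⟨⟨v, fun ψ hψ => hψ⟩, ?_⟩
      intro W hVW ⟨w, hw⟩
      ext ψ
      constructor
      · intro hψW
        by_contra hψ
        have h1 : PropForm.neg ψ ∈ W := hVW hψ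
        exact (hw _ h1) (hw ψ hψW)
      · exact fun h => hVW h
  constructor
  · constructor
    · intro hmem v hv
      obtain ⟨h1, h2, h3⟩ := hfwd v hv
      have := Set.mem_iInter₂.mp hmem {ψ : PropForm | ψ.eval v} ⟨h1, h3⟩
      exact this v (fun ψ hψ => h2 hψ)
    · intro h
      refine Set.mem_iInter₂.mpr ?_
      rintro V ⟨hAV, hV⟩
      exact hback h V hAV hV
  · constructor
    · intro hmem v hv
      obtain ⟨h1, h2, h3⟩ := hfwd v hv
      have := Set.mem_iInter₂.mp hmem {ψ : PropForm | ψ.eval v} ⟨h1, h2, h3⟩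
      exact this v (fun ψ hψ => h2 hψ)
    · intro h
      refine Set.mem_iInter₂.mpr ?_
      rintro V ⟨hAV, _, hV⟩
      exact hback h V hAV hV
end

section
/- For i ∈ {1,3}: for every normative system N and input A, the throughput output equals the consequence closure of the input together with the plain output, i.e., out_i+(N,A) = Cn(A ∪ out_i(N,A)), where out_i+(N,A) = out_i(N ∪ I, A) with I = {(x,x) | x ∈ L}. -/
lemma subset_Cn' (A : Set PropForm) : A ⊆ Cn A := fun φ h v hv => hv φ h

lemma Cn_mono' {A B : Set PropForm} (h : A ⊆ B) : Cn A ⊆ Cn B :=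
  fun φ hφ v hv => hφ v (fun ψ hψ => hv ψ (h hψ))

lemma Cn_of_subset_Cn' {A B : Set PropForm} (h : A ⊆ Cn B) : Cn A ⊆ Cn B :=
  fun φ hφ v hv => hφ v (fun ψ hψ => h hψ v hv)

lemma Cn_Cn' (A : Set PropForm) : Cn (Cn A) = Cn A :=
  Set.Subset.antisymm (Cn_of_subset_Cn' (le_refl _)) (Cn_mono' (subset_Cn' A))

lemma Cn_union_Cn (X Y : Set PropForm) : Cn (X ∪ Cn Y) = Cn (X ∪ Y) := by
  apply Set.Subset.antisymm
  · apply Cn_of_subset_Cn'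
    apply Set.union_subset
    · exact (Set.subset_union_left).trans (subset_Cn' _)
    · exact Cn_mono' Set.subset_union_right
  · exact Cn_mono' (Set.union_subset_union_right _ (subset_Cn' _))

lemma img_thruI (B : Set PropForm) : img thruI B = B := by
  ext x
  constructor
  · rintro ⟨a, ha, hax⟩
    have : a = x := hax
    exact this ▸ ha
  · intro hx
    exact ⟨x, hx, rfl⟩

lemma img_union' (N M : Set IONorm) (B : Set PropForm) :
    img (N ∪ M) B = img N B ∪ img M B := by
  ext x
  constructor
  · rintro ⟨a, ha, h | h⟩
    · exact Or.inl ⟨a, ha, h⟩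
    · exact Or.inr ⟨a, ha, h⟩
  · rintro (⟨a, ha, h⟩ | ⟨a, ha, h⟩)
    · exact ⟨a, ha, Or.inl h⟩
    · exact ⟨a, ha, Or.inr h⟩

lemma img_mono' {N : Set IONorm} {B C : Set PropForm} (h : B ⊆ C) :
    img N B ⊆ img N C := by
  rintro x ⟨a, ha, hn⟩; exact ⟨a, h ha, hn⟩

/-- out3 is contained in any Cn(img N B) for admissible B. -/
lemma out3_subset {N : Set IONorm} {A B : Set PropForm}
    (hAB : A ⊆ B) (hB : B = Cn B) (hNB : img N B ⊆ B) :
    out3 N A ⊆ Cn (img N B) := by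
  intro x hx
  have := Set.mem_iInter₂.mp hx B
  exact this ⟨hAB, hB, hNB⟩

/-- For `i ∈ {1,3}`: `out_i+(N,A) = Cn(A ∪ out_i(N,A))`, where
`out_i+(N,A) = out_i(N ∪ I, A)`. -/
theorem throughput_eq_Cn_union_output (N : Set IONorm) (hN : N.Finite)
    (A : Set PropForm) :
    out1 (N ∪ thruI) A = Cn (A ∪ out1 N A) ∧
    out3 (N ∪ thruI) A = Cn (A ∪ out3 N A) := by
  constructor
  · -- out1 case
    show Cn (img (N ∪ thruI) (Cn A)) = Cn (A ∪ Cn (img N (Cn A)))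
    rw [img_union', img_thruI]
    rw [Cn_union_Cn (img N (Cn A)) A, Cn_union_Cn A (img N (Cn A))]
    rw [Set.union_comm]
  · -- out3 case
    set T := Cn (A ∪ out3 N A) with hT
    -- key facts about T
    have hAT : A ⊆ T := (Set.subset_union_left).trans (subset_Cn' _)
    have houtT : out3 N A ⊆ T := (Set.subset_union_right).trans (subset_Cn' _)
    have hTCn : T = Cn T := (Cn_Cn' _).symm
    -- T is contained in every N-admissible closed set
    have hTsub : ∀ B : Set PropForm, A ⊆ B → B = Cn B → img N B ⊆ B → T ⊆ B := by
      intro B hAB hB hNB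
      have h1 : out3 N A ⊆ B := by
        refine (out3_subset hAB hB hNB).trans ?_
        calc Cn (img N B) ⊆ Cn B := Cn_of_subset_Cn' (hNB.trans (subset_Cn' B))
          _ = B := hB.symm
      have : A ∪ out3 N A ⊆ B := Set.union_subset hAB h1
      calc T ⊆ Cn B := Cn_of_subset_Cn' (this.trans (subset_Cn' B))
        _ = B := hB.symm
    -- img N T ⊆ T
    have hNT : img N T ⊆ T := by
      rintro x ⟨a, haT, hn⟩
      apply houtT
      refine Set.mem_iInter₂.mpr ?_
      rintro B ⟨hAB, hB, hNB⟩
      have haB : a ∈ B := hTsub B hAB hB hNB haT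
      exact subset_Cn' _ ⟨a, haB, hn⟩
    -- img (N ∪ thruI) T ⊆ T
    have hNIT : img (N ∪ thruI) T ⊆ T := by
      rw [img_union', img_thruI]
      exact Set.union_subset hNT (subset_refl _)
    apply Set.Subset.antisymm
    · -- out3+ ⊆ T : use T itself as admissible set
      intro x hx
      have := Set.mem_iInter₂.mp hx T ⟨hAT, hTCn, hNIT⟩
      have h2 : Cn (img (N ∪ thruI) T) ⊆ T := by
        calc Cn (img (N ∪ thruI) T) ⊆ Cn T :=
              Cn_of_subset_Cn' (hNIT.trans (subset_Cn' T))
          _ = T := hTCn.symm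
      exact h2 this
    · -- T ⊆ out3+
      intro x hx
      refine Set.mem_iInter₂.mpr ?_
      rintro B ⟨hAB, hB, hNIB⟩
      rw [img_union', img_thruI] at hNIB
      have hNB : img N B ⊆ B := (Set.subset_union_left).trans hNIB
      have hTB : T ⊆ B := hTsub B hAB hB hNB
      have hBsub : B ⊆ Cn (img (N ∪ thruI) B) := by
        rw [img_union', img_thruI]
        exact (Set.subset_union_right).trans (subset_Cn' _)
      exact hBsub (hTB hx)
end

section
/- For i ∈ {2,4}: for every normative system N and input A, the throughput output collapses to classical consequence of the materialized norms, i.e., out_i+(N,A) = Cn(A ∪ m(N)), where out_i+(N,A) = out_i(N ∪ I, A) with I = {(x,x) | x ∈ L} and m(N) = {¬a ∨ x | (a,x) ∈ N}. -/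
lemma mem_or_neg_of_max (V : Set PropForm) (hsat : Satisfiable V)
    (hmax : ∀ W, V ⊆ W → Satisfiable W → W = V) (φ : PropForm) :
    φ ∈ V ∨ PropForm.neg φ ∈ V := by
  obtain ⟨v, hv⟩ := hsat
  by_cases h : φ.eval v
  · left
    have : V ∪ {φ} = V := hmax _ Set.subset_union_left
      ⟨v, by rintro ψ (hψ | rfl); exacts [hv ψ hψ, h]⟩
    rw [← this]; exact Or.inr rfl
  · right
    have : V ∪ {PropForm.neg φ} = V := hmax _ Set.subset_union_left
      ⟨v, by rintro ψ (hψ | rfl); exacts [hv ψ hψ, h]⟩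
    rw [← this]; exact Or.inr rfl

lemma self_subset_img (N : Set IONorm) (V : Set PropForm) :
    V ⊆ img (N ∪ thruI) V :=
  fun x hx => ⟨x, hx, Or.inr rfl⟩

lemma key_sub (N : Set IONorm) (A V : Set PropForm) (hAV : A ⊆ V)
    (hV : CompleteSet V) :
    Cn (A ∪ mat N) ⊆ Cn (img (N ∪ thruI) V) := by
  intro φ hφ v hv
  apply hφ v
  rintro ψ (hψ | ⟨⟨a, x⟩, haxN, rfl⟩)
  · exact hv ψ (self_subset_img N V (hAV hψ))
  · show ¬ a.eval v ∨ x.eval v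
    rcases hV with rfl | ⟨hsat, hmax⟩
    · exact Or.inr (hv x ⟨a, trivial, Or.inl haxN⟩)
    · rcases mem_or_neg_of_max V hsat hmax a with ha | ha
      · exact Or.inr (hv x ⟨a, ha, Or.inl haxN⟩)
      · exact Or.inl (hv _ (self_subset_img N V ha))

lemma key_sup (N : Set IONorm) (A : Set PropForm) :
    out4 (N ∪ thruI) A ⊆ Cn (A ∪ mat N) := by
  intro φ hφ v hv
  set V : Set PropForm := {ψ | ψ.eval v} with hVdef
  have himg : img (N ∪ thruI) V ⊆ V := by
    rintro x ⟨a, ha, haxN | hax⟩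
    · have := hv _ (Or.inr ⟨(a, x), haxN, rfl⟩)
      rcases this with h | h
      · exact absurd ha h
      · exact h
    · have : a = x := hax
      exact this ▸ ha
  have hcomp : CompleteSet V := by
    refine Or.inr ⟨⟨v, fun ψ h => h⟩, fun W hVW ⟨w, hw⟩ => ?_⟩
    apply Set.Subset.antisymm _ hVW
    intro ψ hψ
    by_contra hψV
    have hneg : PropForm.neg ψ ∈ V := hψV
    exact hw _ (hVW hneg) (hw ψ hψ)
  have hmem : φ ∈ Cn (img (N ∪ thruI) V) := by
    have := Set.mem_iInter₂.mp hφ V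
    exact this ⟨fun ψ hψ => hv ψ (Or.inl hψ), himg, hcomp⟩
  exact hmem v fun ψ hψ => himg hψ

/-- For `i ∈ {2,4}`: `out_i+(N,A) = Cn(A ∪ m(N))`, where
`out_i+(N,A) = out_i(N ∪ I, A)`. -/
theorem throughput_collapse_to_materialization (N : Set IONorm) (hN : N.Finite)
    (A : Set PropForm) :
    out2 (N ∪ thruI) A = Cn (A ∪ mat N) ∧
    out4 (N ∪ thruI) A = Cn (A ∪ mat N) := by
  have h24 : out2 (N ∪ thruI) A ⊆ out4 (N ∪ thruI) A := by
    intro φ hφ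
    refine Set.mem_iInter₂.mpr fun V ⟨hAV, _, hV⟩ =>
      Set.mem_iInter₂.mp hφ V ⟨hAV, hV⟩
  have hsub2 : Cn (A ∪ mat N) ⊆ out2 (N ∪ thruI) A := by
    intro φ hφ
    exact Set.mem_iInter₂.mpr fun V ⟨hAV, hV⟩ => key_sub N A V hAV hV hφ
  have hsup : out4 (N ∪ thruI) A ⊆ Cn (A ∪ mat N) := key_sup N A
  constructor
  · exact Set.Subset.antisymm (fun φ h => hsup (h24 h)) hsub2
  · exact Set.Subset.antisymm hsup fun φ h => h24 (hsub2 h)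
end
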